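/- Let {ψᵢ¹ ⊗ ψᵢ² : i = 1…d} be an orthonormal product basis of ℂ^{d₁} ⊗ ℂ^{d₂}, d = d₁d₂, where ψᵢ¹ ∈ ℂ^{d₁} and ψᵢ² ∈ ℂ^{d₂} are unit vectors. Then for any unit vector μ¹ ∈ ℂ^{d₁} one has Σ_{i=1}^{d} |⟨ψᵢ¹, μ¹⟩|² = d₂, and for any unit vector μ² ∈ ℂ^{d₂} one has Σ_{i=1}^{d} |⟨ψᵢ², μ²⟩|² = d₁. -/

import Mathlib

/-!
Since the family has `d₁d₂` orthonormal members it is an orthonormal basis, so Parseval applied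
to `μ¹ ⊗ ν` gives `Σᵢ |⟨ψᵢ¹, μ¹⟩|² |⟨ψᵢ², ν⟩|² = ‖μ¹‖² ‖ν‖²`. Summing this over the standard
basis vectors `ν = e_j` of `ℂ^{d₂}` and applying Parseval once more to each `ψᵢ²` turns the left
side into `Σᵢ |⟨ψᵢ¹, μ¹⟩|² ‖ψᵢ²‖²` and the right side into `d₂ ‖μ¹‖²`.
-/

open scoped ComplexInnerProductSpace

/-- The tensor product of two vectors, realized concretely on `EuclideanSpace`:
`(a ⊗ b) (i, j) = a i * b j`. -/
noncomputable def eprod {ι γ : Type*} (a : EuclideanSpace ℂ ι) (b : EuclideanSpace ℂ γ) :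
    EuclideanSpace ℂ (ι × γ) :=
  WithLp.toLp 2 (fun p : ι × γ => a p.1 * b p.2)

open Module

section

variable {ι 𝕜 E : Type*} [Fintype ι] [RCLike 𝕜] [NormedAddCommGroup E] [InnerProductSpace 𝕜 E]
  [FiniteDimensional 𝕜 E] {v : ι → E}

noncomputable def OrthonormalBasis.ofCardEqFinrank (hv : Orthonormal 𝕜 v)
    (card_eq : Fintype.card ι = finrank 𝕜 E) : OrthonormalBasis ι 𝕜 E :=
  .mk hv (hv.linearIndependent.span_eq_top_of_card_eq_finrank' card_eq).ge

@[simp]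
theorem OrthonormalBasis.coe_ofCardEqFinrank (hv : Orthonormal 𝕜 v)
    (card_eq : Fintype.card ι = finrank 𝕜 E) : ⇑(OrthonormalBasis.ofCardEqFinrank hv card_eq) = v :=
  OrthonormalBasis.coe_mk _ _

end

section

variable {ι α β : Type*} [Fintype ι] [Fintype α] [Fintype β]

theorem norm_eprod (a : EuclideanSpace ℂ α) (b : EuclideanSpace ℂ β) :
    ‖eprod a b‖ = ‖a‖ * ‖b‖ := by
  rw [EuclideanSpace.norm_eq, EuclideanSpace.norm_eq, EuclideanSpace.norm_eq,
    ← Real.sqrt_mul (by positivity), Finset.sum_mul_sum, Fintype.sum_prod_type]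
  simp [eprod, mul_pow]

theorem inner_eprod_eprod (a c : EuclideanSpace ℂ α) (b e : EuclideanSpace ℂ β) :
    ⟪eprod a b, eprod c e⟫ = ⟪a, c⟫ * ⟪b, e⟫ := by
  simp only [EuclideanSpace.inner_eq_star_dotProduct]
  simp [dotProduct, eprod, Finset.sum_mul_sum, Fintype.sum_prod_type, mul_mul_mul_comm]

variable {ψ₁ : ι → EuclideanSpace ℂ α} {ψ₂ : ι → EuclideanSpace ℂ β}

theorem sum_sq_norm_inner_mul_sq_norm_inner_of_orthonormal_eprod
    (hB : Orthonormal ℂ fun i => eprod (ψ₁ i) (ψ₂ i))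
    (hcard : Fintype.card ι = Fintype.card α * Fintype.card β)
    (μ : EuclideanSpace ℂ α) (ν : EuclideanSpace ℂ β) :
    ∑ i, ‖⟪ψ₁ i, μ⟫‖ ^ 2 * ‖⟪ψ₂ i, ν⟫‖ ^ 2 = ‖μ‖ ^ 2 * ‖ν‖ ^ 2 := by
  let B := OrthonormalBasis.ofCardEqFinrank hB (by simp [hcard])
  simpa [B, inner_eprod_eprod, norm_eprod, mul_pow] using B.sum_sq_norm_inner_right (eprod μ ν)

theorem sum_sq_norm_inner_left_mul_sq_norm_of_orthonormal_eprod
    (hB : Orthonormal ℂ fun i => eprod (ψ₁ i) (ψ₂ i))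
    (hcard : Fintype.card ι = Fintype.card α * Fintype.card β) (μ : EuclideanSpace ℂ α) :
    ∑ i, ‖⟪ψ₁ i, μ⟫‖ ^ 2 * ‖ψ₂ i‖ ^ 2 = ‖μ‖ ^ 2 * Fintype.card β := by
  let e := EuclideanSpace.basisFun β ℂ
  calc ∑ i, ‖⟪ψ₁ i, μ⟫‖ ^ 2 * ‖ψ₂ i‖ ^ 2
      = ∑ j, ∑ i, ‖⟪ψ₁ i, μ⟫‖ ^ 2 * ‖⟪ψ₂ i, e j⟫‖ ^ 2 := by
        simp_rw [Finset.sum_comm (γ := β), ← Finset.mul_sum, e.sum_sq_norm_inner_left]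
    _ = ∑ j : β, ‖μ‖ ^ 2 := by
        simp_rw [sum_sq_norm_inner_mul_sq_norm_inner_of_orthonormal_eprod hB hcard, e.norm_eq_one,
          one_pow, mul_one]
    _ = ‖μ‖ ^ 2 * Fintype.card β := by simp [mul_comm]

theorem sum_sq_norm_mul_sq_norm_inner_right_of_orthonormal_eprod
    (hB : Orthonormal ℂ fun i => eprod (ψ₁ i) (ψ₂ i))
    (hcard : Fintype.card ι = Fintype.card α * Fintype.card β) (ν : EuclideanSpace ℂ β) :
    ∑ i, ‖ψ₁ i‖ ^ 2 * ‖⟪ψ₂ i, ν⟫‖ ^ 2 = Fintype.card α * ‖ν‖ ^ 2 := by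
  let e := EuclideanSpace.basisFun α ℂ
  calc ∑ i, ‖ψ₁ i‖ ^ 2 * ‖⟪ψ₂ i, ν⟫‖ ^ 2
      = ∑ j, ∑ i, ‖⟪ψ₁ i, e j⟫‖ ^ 2 * ‖⟪ψ₂ i, ν⟫‖ ^ 2 := by
        simp_rw [Finset.sum_comm (γ := α), ← Finset.sum_mul, e.sum_sq_norm_inner_left]
    _ = ∑ j : α, ‖ν‖ ^ 2 := by
        simp_rw [sum_sq_norm_inner_mul_sq_norm_inner_of_orthonormal_eprod hB hcard, e.norm_eq_one,
          one_pow, one_mul]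
    _ = Fintype.card α * ‖ν‖ ^ 2 := by simp

end

/-- For an orthonormal product basis `{ψᵢ¹ ⊗ ψᵢ² : i = 1…d}` of `ℂ^{d₁} ⊗ ℂ^{d₂}`,
`d = d₁d₂`, and any unit vectors `μ¹ ∈ ℂ^{d₁}`, `μ² ∈ ℂ^{d₂}`, one has
`Σᵢ |⟨ψᵢ¹, μ¹⟩|² = d₂` and `Σᵢ |⟨ψᵢ², μ²⟩|² = d₁`. -/
theorem product_basis_overlap_sums {d₁ d₂ : ℕ}
    (ψ₁ : Fin (d₁ * d₂) → EuclideanSpace ℂ (Fin d₁))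
    (ψ₂ : Fin (d₁ * d₂) → EuclideanSpace ℂ (Fin d₂))
    (hψ₁ : ∀ i, ‖ψ₁ i‖ = 1) (hψ₂ : ∀ i, ‖ψ₂ i‖ = 1)
    (hB : Orthonormal ℂ (fun i => eprod (ψ₁ i) (ψ₂ i))) :
    (∀ μ₁ : EuclideanSpace ℂ (Fin d₁), ‖μ₁‖ = 1 →
        ∑ i, ‖⟪ψ₁ i, μ₁⟫‖ ^ 2 = (d₂ : ℝ)) ∧
    (∀ μ₂ : EuclideanSpace ℂ (Fin d₂), ‖μ₂‖ = 1 →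
        ∑ i, ‖⟪ψ₂ i, μ₂⟫‖ ^ 2 = (d₁ : ℝ)) := by
  have hcard : Fintype.card (Fin (d₁ * d₂)) = Fintype.card (Fin d₁) * Fintype.card (Fin d₂) := by
    simp
  refine ⟨fun μ₁ hμ₁ => ?_, fun μ₂ hμ₂ => ?_⟩
  · simpa [hψ₂, hμ₁] using sum_sq_norm_inner_left_mul_sq_norm_of_orthonormal_eprod hB hcard μ₁
  · simpa [hψ₁, hμ₂] using sum_sq_norm_mul_sq_norm_inner_right_of_orthonormal_eprod hB hcard μ₂
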